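/- For nonnegative integers b and n with n/6 ≤ b < n/4, the graph S_{b,n} has book number exactly b. -/

import Mathlib

open Finset SimpleGraph

/-- Adjacency of the 3-prism graph: two triangles `{(s,0),(s,1),(s,2)}` for `s : Fin 2`,
with a perfect matching between vertices with the same second coordinate. -/
def prismAdj (p q : Fin 2 × Fin 3) : Prop :=
  (p.1 = q.1 ∧ p.2 ≠ q.2) ∨ (p.1 ≠ q.1 ∧ p.2 = q.2)

/-- The sizes of the six parts of `S_{b,n}`: four parts of size `b` and two parts of
size `⌊(n-4b)/2⌋` and `⌈(n-4b)/2⌉`. -/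
def prismPartSize (b n : ℕ) (p : Fin 2 × Fin 3) : ℕ :=
  if p.2 = 2 then (if p.1 = 0 then (n - 4 * b) / 2 else (n - 4 * b) - (n - 4 * b) / 2) else b

/-- The graph `S_{b,n}`, the blow-up of the 3-prism graph. -/
def SGraph (b n : ℕ) : SimpleGraph (Σ p : Fin 2 × Fin 3, Fin (prismPartSize b n p)) where
  Adj x y := prismAdj x.1 y.1
  symm := by
    constructor; rintro x y (⟨h1, h2⟩ | ⟨h1, h2⟩)
    · exact Or.inl ⟨h1.symm, fun h => h2 h.symm⟩
    · exact Or.inr ⟨fun h => h1 h.symm, h2.symm⟩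
  loopless := by
    constructor; rintro x (⟨_, h⟩ | ⟨h, _⟩) <;> exact h rfl

instance (b n : ℕ) : DecidableRel (SGraph b n).Adj := fun x y =>
  decidable_of_iff ((x.1.1 = y.1.1 ∧ x.1.2 ≠ y.1.2) ∨ (x.1.1 ≠ y.1.1 ∧ x.1.2 = y.1.2)) Iff.rfl


/-! `S_{b,n}` is the blow-up of the 3-prism `K₂ □ K₃`, so the common neighbourhood of an edge
of `S_{b,n}` is the union of the parts sitting over the common neighbours of its image in the
prism. Every edge of the prism lies in exactly one triangle, and `n ≤ 6b` makes every part of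
size at most `b`. The edge between `V₁` and `V₃` (nonempty as `4b < n`) has common
neighbourhood `V₂`. -/

namespace SimpleGraph

variable {V W : Type*} [Fintype V] [Fintype W] [DecidableEq V] [DecidableEq W]

theorem card_inter_neighborFinset_comap (H : SimpleGraph V) [DecidableRel H.Adj] (π : W → V)
    (G : SimpleGraph W) [DecidableRel G.Adj] (hG : G = H.comap π) (u v : W) :
    #(G.neighborFinset u ∩ G.neighborFinset v) =
      ∑ p ∈ H.neighborFinset (π u) ∩ H.neighborFinset (π v), #{x | π x = p} := by
  subst hG
  rw [card_eq_sum_card_fiberwise (f := π)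
    (t := H.neighborFinset (π u) ∩ H.neighborFinset (π v)) fun x hx => by simpa using hx]
  refine sum_congr rfl fun p hp => congrArg card ?_
  ext x
  simp only [mem_filter, mem_inter, mem_neighborFinset, comap_adj, mem_univ, true_and,
    and_iff_right_iff_imp] at hp ⊢
  rintro rfl
  exact hp

theorem card_filter_sigma_fst_eq (f : V → ℕ) (p : V) :
    #{x : Σ q, Fin (f q) | x.1 = p} = f p := by
  rw [card_filter, Fintype.sum_sigma]
  simp [apply_ite]

variable (H : SimpleGraph V) [DecidableRel H.Adj] {f : V → ℕ}
  (G : SimpleGraph (Σ p, Fin (f p))) [DecidableRel G.Adj]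

theorem card_inter_neighborFinset_comap_sigma_fst (hG : G = H.comap Sigma.fst)
    (u v : Σ p, Fin (f p)) :
    #(G.neighborFinset u ∩ G.neighborFinset v) =
      ∑ p ∈ H.neighborFinset u.1 ∩ H.neighborFinset v.1, f p := by
  simp only [card_inter_neighborFinset_comap H _ G hG, card_filter_sigma_fst_eq]

theorem card_inter_neighborFinset_comap_sigma_fst_le (hG : G = H.comap Sigma.fst) {k m : ℕ}
    (hH : ∀ p q, H.Adj p q → #(H.neighborFinset p ∩ H.neighborFinset q) ≤ k)
    (hf : ∀ p, f p ≤ m) {u v : Σ p, Fin (f p)} (huv : G.Adj u v) :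
    #(G.neighborFinset u ∩ G.neighborFinset v) ≤ k * m := by
  rw [card_inter_neighborFinset_comap_sigma_fst H G hG]
  calc _ ≤ #(H.neighborFinset u.1 ∩ H.neighborFinset v.1) • m :=
        sum_le_card_nsmul _ _ _ fun p _ => hf p
    _ ≤ k * m := Nat.mul_le_mul_right m (hH _ _ (by subst hG; exact huv))

end SimpleGraph

/-- The 3-prism; its vertex `(s, i)` is `Uᵢ₊₁` if `s = 0` and `Vᵢ₊₁` if `s = 1`. -/
def prismGraph : SimpleGraph (Fin 2 × Fin 3) :=
  (⊤ : SimpleGraph (Fin 2)) □ (⊤ : SimpleGraph (Fin 3))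

theorem prismGraph_adj {p q : Fin 2 × Fin 3} : prismGraph.Adj p q ↔ prismAdj p q := by
  simp only [prismGraph, boxProd_adj, top_adj, prismAdj]
  tauto

instance : DecidableRel prismGraph.Adj := fun p q =>
  decidable_of_iff' ((p.1 = q.1 ∧ p.2 ≠ q.2) ∨ (p.1 ≠ q.1 ∧ p.2 = q.2)) prismGraph_adj

theorem prismGraph.card_inter_neighborFinset_le_one {p q : Fin 2 × Fin 3}
    (h : prismGraph.Adj p q) :
    #(prismGraph.neighborFinset p ∩ prismGraph.neighborFinset q) ≤ 1 := by
  revert p q; decide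

theorem prismGraph.neighborFinset_inter_eq :
    prismGraph.neighborFinset (1, 0) ∩ prismGraph.neighborFinset (1, 2) = {(1, 1)} := by
  decide

theorem SGraph_eq_comap (b n : ℕ) : SGraph b n = prismGraph.comap Sigma.fst := by
  ext x y
  exact prismGraph_adj.symm

theorem prismPartSize_le {b n : ℕ} (h : n ≤ 6 * b) (p : Fin 2 × Fin 3) :
    prismPartSize b n p ≤ b := by
  unfold prismPartSize
  split_ifs <;> omega

/-- For nonnegative integers `b` and `n` with `n/6 ≤ b < n/4`, the graph `S_{b,n}` has
book number exactly `b`: every edge lies in at most `b` triangles, and some edge lies in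
exactly `b` triangles. -/
theorem SGraph_bookNumber (b n : ℕ) (h1 : (n : ℝ) / 6 ≤ b) (h2 : (b : ℝ) < n / 4) :
    (∀ u v, (SGraph b n).Adj u v →
      ((SGraph b n).neighborFinset u ∩ (SGraph b n).neighborFinset v).card ≤ b) ∧
    (∃ u v, (SGraph b n).Adj u v ∧
      ((SGraph b n).neighborFinset u ∩ (SGraph b n).neighborFinset v).card = b) := by
  have hn6 : n ≤ 6 * b := by exact_mod_cast (by linarith : (n : ℝ) ≤ 6 * b)
  have hn4 : 4 * b < n := by exact_mod_cast (by linarith : (4 * b : ℝ) < n)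
  refine ⟨fun u v huv => ?_, ?_⟩
  · simpa using card_inter_neighborFinset_comap_sigma_fst_le _ _ (SGraph_eq_comap b n)
      (fun _ _ => prismGraph.card_inter_neighborFinset_le_one) (prismPartSize_le hn6) huv
  · refine ⟨⟨(1, 0), 0, by simp only [prismPartSize, Fin.reduceEq, ↓reduceIte]; omega⟩,
      ⟨(1, 2), 0, by simp only [prismPartSize, ↓reduceIte, one_ne_zero]; omega⟩,
      prismGraph_adj.mp (show prismGraph.Adj (1, 0) (1, 2) by decide), ?_⟩
    rw [card_inter_neighborFinset_comap_sigma_fst _ _ (SGraph_eq_comap b n)]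
    simp [prismGraph.neighborFinset_inter_eq, prismPartSize]
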